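/- Let α^{(1)}, α^{(2)}, α^{(3)}, α^{(4)} be admissible tuples, each of which is either good or bad with one and the same bad index, and suppose a 4-linear form Λ is of restricted weak type α^{(s)} for each s. Let α := θ₁α^{(1)}+⋯+θ₄α^{(4)} with θ_s ∈ (0,1), θ₁+⋯+θ₄ = 1, and assume α is admissible. Assume some α^{(j)} is a majorant of α with index j₀, where: (1) if α is good then j₀ is an index with α_{j₀} > 0, and (2) if α is bad then j₀ is its bad index (and it is the common bad index of the bad tuples among the α^{(s)}). Then Λ is of restricted weak type α. -/

import Mathlib

/-!
Call an estimate of restricted weak type in which only the `j₀`-th set is shrunk, and whose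
right-hand side uses the unshrunk sets, a major-subset bound. Each tuple `a s` gives one: shrinking
`E j₀` to a major subset changes `|E j₀| ^ a s j₀` by a factor at most `4`, as admissibility forces
`a s j₀ > -2`. Such bounds pass to convex combinations of exponents, because for fixed sets
`∏ |E i| ^ α i` is a weighted geometric mean of the products `∏ |E i| ^ a s i`, so one of these
is smaller.

If `α j₀ < 0`, shrinking `E j₀` only increases `|E j₀| ^ α j₀`, so a major-subset bound at `α` is
already of restricted weak type `α`. If `α` is good, exhaust `E j₀` by repeatedly removing a
major subset of what is left: after `n` steps at most `2⁻¹ ^ n * |E j₀|` is left, so the pieces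
contribute a geometric series of ratio `2⁻¹ ^ α j₀`, and the contribution of what is left tends
to zero by the estimate at a good tuple `a s` with `a s j₀ > 0`, applied to that set padded by
a short interval so that it has positive measure.
-/

open MeasureTheory

noncomputable section

/-- `X E` is the set of measurable functions supported on `E` with `‖f‖_∞ ≤ 1`. -/
def MemX (E : Set ℝ) (f : ℝ → ℂ) : Prop :=
  Measurable f ∧ (∀ x ∉ E, f x = 0) ∧ ∀ x, ‖f x‖ ≤ 1

/-- A tuple is admissible if each entry is < 1, the entries sum to 1, and at most one entry
is negative. -/
def Admissible (a : Fin 4 → ℝ) : Prop :=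
  (∀ i, a i < 1) ∧ (∑ i, a i = 1) ∧ ∀ i j, a i < 0 → a j < 0 → i = j

/-- A good tuple is an admissible tuple with no negative entry. -/
def GoodTuple (a : Fin 4 → ℝ) : Prop := Admissible a ∧ ∀ i, 0 ≤ a i

/-- Λ is 4-linear: in each slot it is linear. -/
def Multilinear4 (Λ : (Fin 4 → ℝ → ℂ) → ℂ) : Prop :=
  ∀ (i : Fin 4) (f : Fin 4 → ℝ → ℂ) (g : ℝ → ℂ) (c : ℂ),
    Λ (Function.update f i (c • f i + g)) = c * Λ f + Λ (Function.update f i g)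

/-- Λ is of restricted weak type `a` with constant `C`: for all sets `E i` of finite positive
measure there are major subsets `E' i ⊆ E i` (with `E' i = E i` at every good index) such that
`|Λ(f)| ≤ C ∏ |E' i|^{a i}` whenever each `f i ∈ X(E' i)`. -/
def RWT (Λ : (Fin 4 → ℝ → ℂ) → ℂ) (a : Fin 4 → ℝ) (C : ℝ) : Prop :=
  ∀ E : Fin 4 → Set ℝ, (∀ i, MeasurableSet (E i)) → (∀ i, 0 < volume (E i)) →
    (∀ i, volume (E i) < ⊤) →
    ∃ E' : Fin 4 → Set ℝ,
      (∀ i, MeasurableSet (E' i) ∧ E' i ⊆ E i ∧ volume (E i) ≤ 2 * volume (E' i)) ∧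
      (∀ i, 0 ≤ a i → E' i = E i) ∧
      ∀ f : Fin 4 → ℝ → ℂ, (∀ i, MemX (E' i) (f i)) →
        ‖Λ f‖ ≤ C * ∏ i, (volume (E' i)).toReal ^ a i

open Function Filter Topology
open scoped ENNReal

lemma rpow_le_four_mul_rpow {x y e : ℝ} (hy : 0 < y) (hyx : y ≤ x) (hxy : x ≤ 2 * y)
    (he : -2 ≤ e) : y ^ e ≤ 4 * x ^ e := by
  have hxe : 0 < x ^ e := Real.rpow_pos_of_pos (hy.trans_le hyx) e
  rcases le_or_gt 0 e with he0 | he0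
  · linarith [Real.rpow_le_rpow hy.le hyx he0]
  · have hx2 : (x / 2) ^ e = 2 ^ (-e) * x ^ e := by
      rw [Real.div_rpow (by linarith) zero_le_two, Real.rpow_neg zero_le_two, div_eq_inv_mul]
    have h2e : (2 : ℝ) ^ (-e) ≤ 4 := by
      calc (2 : ℝ) ^ (-e) ≤ 2 ^ (2 : ℝ) := Real.rpow_le_rpow_of_exponent_le one_le_two (by linarith)
        _ = 4 := by norm_num
    calc y ^ e ≤ (x / 2) ^ e := Real.rpow_le_rpow_of_nonpos (by linarith) (by linarith) he0.le
      _ ≤ 4 * x ^ e := by rw [hx2]; exact mul_le_mul_of_nonneg_right h2e hxe.le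

lemma exists_prod_rpow_le_prod_rpow_sum {ι σ : Type*} [Fintype ι] [Fintype σ] [Nonempty σ]
    {v : ι → ℝ} (hv : ∀ i, 0 < v i) (a : σ → ι → ℝ) {θ : σ → ℝ} (hθ : ∀ s, 0 ≤ θ s)
    (hθ1 : ∑ s, θ s = 1) : ∃ s, ∏ i, v i ^ a s i ≤ ∏ i, v i ^ (∑ s, θ s * a s i) := by
  have hexp : ∀ e : ι → ℝ, ∏ i, v i ^ e i = Real.exp (∑ i, Real.log (v i) * e i) := fun e => by
    rw [Real.exp_sum]; exact Finset.prod_congr rfl fun i _ => Real.rpow_def_of_pos (hv i) _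
  set L : σ → ℝ := fun s => ∑ i, Real.log (v i) * a s i
  obtain ⟨s, -, hs⟩ := Finset.exists_min_image Finset.univ L Finset.univ_nonempty
  refine ⟨s, ?_⟩
  rw [hexp, hexp, Real.exp_le_exp]
  calc L s = ∑ t, θ t * L s := by rw [← Finset.sum_mul, hθ1, one_mul]
    _ ≤ ∑ t, θ t * L t :=
      Finset.sum_le_sum fun t _ => mul_le_mul_of_nonneg_left (hs t (Finset.mem_univ t)) (hθ t)
    _ = ∑ i, Real.log (v i) * ∑ t, θ t * a t i := by
      simp only [L, Finset.mul_sum]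
      rw [Finset.sum_comm]
      exact Finset.sum_congr rfl fun i _ => Finset.sum_congr rfl fun t _ => by ring

lemma geom_sum_le_inv_one_sub {r : ℝ} (hr0 : 0 ≤ r) (hr1 : r < 1) (N : ℕ) :
    ∑ n ∈ Finset.range N, r ^ n ≤ (1 - r)⁻¹ := by
  simpa [← Finset.range_eq_Ico] using geom_sum_Ico_le_of_lt_one (m := 0) (n := N) hr0 hr1

lemma prod_rpow_update_le {ι : Type*} [Fintype ι] [DecidableEq ι] {v e : ι → ℝ}
    (hv : ∀ i, 0 ≤ v i) {j : ι} {t c : ℝ} (ht : t ^ e j ≤ c * v j ^ e j) :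
    ∏ i, update v j t i ^ e i ≤ c * ∏ i, v i ^ e i := by
  have hupd : (fun i => update v j t i ^ e i) = update (fun i => v i ^ e i) j (t ^ e j) := by
    ext i; exact apply_update (fun i x => x ^ e i) v j t i
  rw [hupd, Finset.prod_update_of_mem (Finset.mem_univ j),
    ← Finset.mul_prod_erase Finset.univ (fun i => v i ^ e i) (Finset.mem_univ j), ← mul_assoc,
    Finset.sdiff_singleton_eq_erase]
  exact mul_le_mul_of_nonneg_right ht (Finset.prod_nonneg fun i _ => Real.rpow_nonneg (hv i) _)

lemma Admissible.neg_two_lt {a : Fin 4 → ℝ} (ha : Admissible a) (i : Fin 4) : -2 < a i := by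
  have hsum := ha.2.1
  rw [Fin.sum_univ_four] at hsum
  fin_cases i <;> simp <;> linarith [ha.1 0, ha.1 1, ha.1 2, ha.1 3]

lemma MemX.mono {E F : Set ℝ} {f : ℝ → ℂ} (hf : MemX E f) (hEF : E ⊆ F) : MemX F f :=
  ⟨hf.1, fun x hx => hf.2.1 x fun h => hx (hEF h), hf.2.2⟩

lemma MemX.indicator {E F : Set ℝ} {f : ℝ → ℂ} (hf : MemX E f) (hF : MeasurableSet F) :
    MemX F (F.indicator f) := by
  refine ⟨hf.1.indicator hF, fun x hx => Set.indicator_of_notMem hx f, fun x => ?_⟩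
  by_cases hx : x ∈ F
  · rw [Set.indicator_of_mem hx]; exact hf.2.2 x
  · rw [Set.indicator_of_notMem hx, norm_zero]; exact zero_le_one

lemma MemX.eq_zero_of_empty {f : ℝ → ℂ} (hf : MemX ∅ f) : f = 0 :=
  funext fun x => hf.2.1 x (Set.notMem_empty x)

lemma memX_update {ι : Type*} [DecidableEq ι] {E : ι → Set ℝ} {f : ι → ℝ → ℂ}
    (hf : ∀ i, MemX (E i) (f i)) (j : ι) {F : Set ℝ} {g : ℝ → ℂ} (hg : MemX F g) (i : ι) :
    MemX (update E j F i) (update f j g i) := by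
  rcases eq_or_ne i j with rfl | hi
  · simpa using hg
  · simpa [hi] using hf i

lemma toReal_measure_update_apply {ι α : Type*} [DecidableEq ι] [MeasurableSpace α]
    (μ : Measure α) (E : ι → Set α) (j : ι) (F : Set α) (i : ι) :
    (μ (update E j F i)).toReal = update (fun i => (μ (E i)).toReal) j (μ F).toReal i :=
  apply_update (fun _ s => (μ s).toReal) E j F i

namespace Multilinear4

variable {Λ : (Fin 4 → ℝ → ℂ) → ℂ}

lemma map_update_add (hΛ : Multilinear4 Λ) (f : Fin 4 → ℝ → ℂ) (i : Fin 4) (g h : ℝ → ℂ) :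
    Λ (update f i (g + h)) = Λ (update f i g) + Λ (update f i h) := by
  simpa using hΛ i (update f i g) h 1

lemma map_eq_zero (hΛ : Multilinear4 Λ) {f : Fin 4 → ℝ → ℂ} {i : Fin 4} (hf : f i = 0) :
    Λ f = 0 := by
  have h := hΛ.map_update_add f i 0 0
  rwa [add_zero, left_eq_add, ← hf, update_eq_self] at h

lemma map_update_sum (hΛ : Multilinear4 Λ) (f : Fin 4 → ℝ → ℂ) (i : Fin 4) {ι : Type*}
    (s : Finset ι) (g : ι → ℝ → ℂ) :
    Λ (update f i (∑ n ∈ s, g n)) = ∑ n ∈ s, Λ (update f i (g n)) := by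
  classical
  induction s using Finset.induction_on with
  | empty => simpa using hΛ.map_eq_zero (update_self i 0 f)
  | insert n s hn ih => rw [Finset.sum_insert hn, Finset.sum_insert hn, hΛ.map_update_add, ih]

end Multilinear4

section Exhaustion

variable {α : Type*} {M : Set α → Set α}

lemma Set.indicator_eq_sum_add_indicator_iterate_sdiff {β : Type*} [AddCommGroup β]
    (hM : ∀ F, M F ⊆ F) (E : Set α) (f : α → β) (N : ℕ) :
    E.indicator f = ∑ n ∈ Finset.range N, (M ((fun F => F \ M F)^[n] E)).indicator f +
      ((fun F => F \ M F)^[N] E).indicator f := by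
  induction N with
  | zero => simp
  | succ N ih =>
    rw [ih, Finset.sum_range_succ, iterate_succ_apply', Set.indicator_sdiff (hM _)]
    abel

variable [MeasurableSpace α] {μ : Measure α}

lemma two_mul_measure_sdiff_le {F M : Set α} (hM : MeasurableSet M) (hMF : M ⊆ F)
    (hmaj : μ F ≤ 2 * μ M) : 2 * μ (F \ M) ≤ μ F := by
  have hsplit : μ (F \ M) + μ M = μ F := by
    rw [← measure_sdiff_add_inter F hM, Set.inter_eq_right.mpr hMF]
  rcases eq_or_ne (μ M) ∞ with htop | htop
  · rw [← hsplit, htop, add_top]; exact le_top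
  · have hle : μ (F \ M) ≤ μ M := by
      refine ENNReal.le_of_add_le_add_right htop ?_
      rw [hsplit, ← two_mul]; exact hmaj
    rw [two_mul, ← hsplit]; exact add_le_add_right hle _

lemma measurableSet_iterate_sdiff_and_le {E : Set α} (hE : MeasurableSet E)
    (hM : ∀ F, MeasurableSet F → F ⊆ E → MeasurableSet (M F) ∧ M F ⊆ F ∧ μ F ≤ 2 * μ (M F))
    (n : ℕ) : MeasurableSet ((fun F => F \ M F)^[n] E) ∧ (fun F => F \ M F)^[n] E ⊆ E ∧
      2 ^ n * μ ((fun F => F \ M F)^[n] E) ≤ μ E := by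
  induction n with
  | zero => simpa using hE
  | succ n ih =>
    obtain ⟨hFm, hFE, hFμ⟩ := ih
    obtain ⟨hMm, hMF, hmaj⟩ := hM _ hFm hFE
    rw [iterate_succ_apply']
    refine ⟨hFm.diff hMm, Set.sdiff_subset.trans hFE, ?_⟩
    calc 2 ^ (n + 1) * μ (_ \ M _) = 2 ^ n * (2 * μ (_ \ M _)) := by rw [pow_succ, mul_assoc]
      _ ≤ 2 ^ n * μ _ := by gcongr; exact two_mul_measure_sdiff_le hMm hMF hmaj
      _ ≤ μ E := hFμ

end Exhaustion

lemma Multilinear4.map_eq_sum_add_iterate_sdiff {Λ : (Fin 4 → ℝ → ℂ) → ℂ} (hΛ : Multilinear4 Λ)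
    {M : Set ℝ → Set ℝ} (hM : ∀ F, M F ⊆ F) {f : Fin 4 → ℝ → ℂ} {j : Fin 4} {E : Set ℝ}
    (hf : ∀ x ∉ E, f j x = 0) (N : ℕ) :
    Λ f = ∑ n ∈ Finset.range N, Λ (update f j ((M ((fun F => F \ M F)^[n] E)).indicator (f j))) +
      Λ (update f j (((fun F => F \ M F)^[N] E).indicator (f j))) := by
  rw [← hΛ.map_update_sum, ← hΛ.map_update_add,
    ← Set.indicator_eq_sum_add_indicator_iterate_sdiff hM,
    Set.indicator_eq_self.mpr (support_subset_iff'.mpr hf), update_eq_self]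

lemma toReal_measure_major_subset {α : Type*} [MeasurableSpace α] {μ : Measure α} {E M : Set α}
    (hpos : 0 < μ E) (hfin : μ E < ∞) (hME : M ⊆ E) (hmaj : μ E ≤ 2 * μ M) :
    0 < (μ M).toReal ∧ (μ M).toReal ≤ (μ E).toReal ∧ (μ E).toReal ≤ 2 * (μ M).toReal := by
  have hMfin : μ M ≠ ∞ := (measure_mono hME |>.trans_lt hfin).ne
  have hMpos : μ M ≠ 0 := fun h => hpos.ne' (le_antisymm (by simpa [h] using hmaj) zero_le)
  refine ⟨ENNReal.toReal_pos hMpos hMfin, ENNReal.toReal_mono hfin.ne (measure_mono hME), ?_⟩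
  simpa using ENNReal.toReal_mono (ENNReal.mul_ne_top ENNReal.ofNat_ne_top hMfin) hmaj

namespace RWT

variable {Λ : (Fin 4 → ℝ → ℂ) → ℂ} {a : Fin 4 → ℝ} {C : ℝ}

lemma mono (h : RWT Λ a C) {C' : ℝ} (hC : C ≤ C') : RWT Λ a C' := by
  intro E hm hpos hfin
  obtain ⟨E', hE', hgood, hbound⟩ := h E hm hpos hfin
  refine ⟨E', hE', hgood, fun f hf => (hbound f hf).trans ?_⟩
  exact mul_le_mul_of_nonneg_right hC
    (Finset.prod_nonneg fun i _ => Real.rpow_nonneg ENNReal.toReal_nonneg _)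

lemma exists_nonneg_const {σ : Type*} [Fintype σ] {a : σ → Fin 4 → ℝ}
    (h : ∀ s, ∃ C, RWT Λ (a s) C) : ∃ C, 0 ≤ C ∧ ∀ s, RWT Λ (a s) C := by
  choose C hC using h
  refine ⟨∑ s, |C s|, Finset.sum_nonneg fun s _ => abs_nonneg _, fun s => (hC s).mono ?_⟩
  exact (le_abs_self _).trans
    (Finset.single_le_sum (f := fun s => |C s|) (fun s _ => abs_nonneg _) (Finset.mem_univ s))

lemma norm_le_of_nonneg (h : RWT Λ a C) (ha : ∀ i, 0 ≤ a i) {E : Fin 4 → Set ℝ}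
    (hm : ∀ i, MeasurableSet (E i)) (hpos : ∀ i, 0 < volume (E i)) (hfin : ∀ i, volume (E i) < ⊤)
    {f : Fin 4 → ℝ → ℂ} (hf : ∀ i, MemX (E i) (f i)) :
    ‖Λ f‖ ≤ C * ∏ i, (volume (E i)).toReal ^ a i := by
  obtain ⟨E', -, hgood, hbound⟩ := h E hm hpos hfin
  have hE' : E' = E := funext fun i => hgood i (ha i)
  subst hE'
  exact hbound f hf

lemma norm_le_of_volume_le (h : RWT Λ a C) (ha : ∀ i, 0 ≤ a i) {E : Fin 4 → Set ℝ}
    (hm : ∀ i, MeasurableSet (E i)) (hpos : ∀ i, 0 < volume (E i)) (hfin : ∀ i, volume (E i) < ⊤)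
    (hC : 0 ≤ C) (j : Fin 4) {F : Set ℝ} (hFm : MeasurableSet F) {ε : ℝ} (hε : 0 < ε)
    (hF : volume F ≤ ENNReal.ofReal ε) {f : Fin 4 → ℝ → ℂ}
    (hf : ∀ i, MemX (update E j F i) (f i)) :
    ‖Λ f‖ ≤ C * ∏ i, update (fun i => (volume (E i)).toReal) j (2 * ε) i ^ a i := by
  set G := F ∪ Set.Ioo 0 ε
  have hGm : MeasurableSet G := hFm.union measurableSet_Ioo
  have hGle : volume G ≤ ENNReal.ofReal (2 * ε) := by
    calc volume G ≤ volume F + volume (Set.Ioo 0 ε) := measure_union_le _ _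
      _ ≤ ENNReal.ofReal ε + ENNReal.ofReal ε := by rw [Real.volume_Ioo, sub_zero]; gcongr
      _ = ENNReal.ofReal (2 * ε) := by rw [← ENNReal.ofReal_add hε.le hε.le, two_mul]
  have hGpos : 0 < volume G := by
    refine lt_of_lt_of_le ?_ (measure_mono Set.subset_union_right)
    simpa [Real.volume_Ioo] using hε
  have hGfin : volume G < ⊤ := hGle.trans_lt ENNReal.ofReal_lt_top
  have hbound := h.norm_le_of_nonneg ha (E := update E j G)
    (fun i => by rcases eq_or_ne i j with rfl | hi <;> simp [*])
    (fun i => by rcases eq_or_ne i j with rfl | hi <;> simp [*])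
    (fun i => by rcases eq_or_ne i j with rfl | hi <;> simp [*])
    (fun i => (hf i).mono (by
      rcases eq_or_ne i j with rfl | hi <;> simp [*, G, Set.subset_union_left]))
  refine hbound.trans (mul_le_mul_of_nonneg_left (Finset.prod_le_prod
    (fun i _ => Real.rpow_nonneg ENNReal.toReal_nonneg _) fun i _ => ?_) hC)
  rcases eq_or_ne i j with rfl | hi
  · simp only [update_self]
    exact Real.rpow_le_rpow ENNReal.toReal_nonneg
      ((ENNReal.toReal_le_of_le_ofReal (by positivity) hGle)) (ha i)
  · simp [hi]

lemma tendsto_map_update_indicator (h : RWT Λ a C) (ha : ∀ i, 0 ≤ a i) {j : Fin 4} (hj : 0 < a j)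
    {E : Fin 4 → Set ℝ} (hm : ∀ i, MeasurableSet (E i)) (hpos : ∀ i, 0 < volume (E i))
    (hfin : ∀ i, volume (E i) < ⊤) (hC : 0 ≤ C) {F : ℕ → Set ℝ} (hFm : ∀ n, MeasurableSet (F n))
    (hFfin : ∀ n, volume (F n) ≠ ⊤) (hF : Tendsto (fun n => (volume (F n)).toReal) atTop (𝓝 0))
    {f : Fin 4 → ℝ → ℂ} (hf : ∀ i, MemX (E i) (f i)) :
    Tendsto (fun n => Λ (update f j ((F n).indicator (f j)))) atTop (𝓝 0) := by
  set K : Fin 4 → ℝ := fun i => (volume (E i)).toReal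
  set ε : ℕ → ℝ := fun n => (volume (F n)).toReal + 1 / (n + 1)
  have hεpos : ∀ n, 0 < ε n := fun n => by positivity
  have hbound : ∀ n, ‖Λ (update f j ((F n).indicator (f j)))‖ ≤
      C * ∏ i, update K j (2 * ε n) i ^ a i := fun n =>
    h.norm_le_of_volume_le ha hm hpos hfin hC j (hFm n) (hεpos n)
      ((ENNReal.le_ofReal_iff_toReal_le (hFfin n) (hεpos n).le).mpr
        (le_add_of_nonneg_right (by positivity)))
      (memX_update hf j ((hf j).indicator (hFm n)))
  have hε : Tendsto (fun n => 2 * ε n) atTop (𝓝 0) := by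
    simpa [ε] using (hF.add tendsto_one_div_add_atTop_nhds_zero_nat).const_mul 2
  have hcont : Continuous fun t : ℝ => C * ∏ i, update K j t i ^ a i :=
    continuous_const.mul (continuous_finsetProd _ fun i _ => (Real.continuous_rpow_const (ha i)).comp
      ((continuous_apply i).comp (continuous_const (y := K).update j continuous_id)))
  have hzero : C * ∏ i, update K j 0 i ^ a i = 0 :=
    mul_eq_zero_of_right C
      (Finset.prod_eq_zero (Finset.mem_univ j) (by simp [Real.zero_rpow hj.ne']))
  exact squeeze_zero_norm hbound (hzero ▸ (hcont.tendsto 0).comp hε)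

end RWT

def MajorSubsetBound (Λ : (Fin 4 → ℝ → ℂ) → ℂ) (j₀ : Fin 4) (b : Fin 4 → ℝ) (C : ℝ) : Prop :=
  ∀ E : Fin 4 → Set ℝ, (∀ i, MeasurableSet (E i)) → (∀ i, 0 < volume (E i)) →
    (∀ i, volume (E i) < ⊤) →
    ∃ M, MeasurableSet M ∧ M ⊆ E j₀ ∧ volume (E j₀) ≤ 2 * volume M ∧
      ∀ f : Fin 4 → ℝ → ℂ, (∀ i, MemX (update E j₀ M i) (f i)) →
        ‖Λ f‖ ≤ C * ∏ i, (volume (E i)).toReal ^ b i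

section

variable {Λ : (Fin 4 → ℝ → ℂ) → ℂ} {j₀ : Fin 4} {C : ℝ}

lemma RWT.majorSubsetBound {a : Fin 4 → ℝ} (h : RWT Λ a C) (hC : 0 ≤ C)
    (ha : ∀ i, i ≠ j₀ → 0 ≤ a i) (haj : -2 ≤ a j₀) : MajorSubsetBound Λ j₀ a (4 * C) := by
  intro E hm hpos hfin
  obtain ⟨E', hE', hgood, hbound⟩ := h E hm hpos hfin
  obtain ⟨hMpos, hME, hEM⟩ :=
    toReal_measure_major_subset (hpos j₀) (hfin j₀) (hE' j₀).2.1 (hE' j₀).2.2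
  have hE'eq : E' = update E j₀ (E' j₀) := funext fun i => by
    rcases eq_or_ne i j₀ with rfl | hi
    · simp
    · simp [hi, hgood i (ha i hi)]
  refine ⟨E' j₀, (hE' j₀).1, (hE' j₀).2.1, (hE' j₀).2.2, fun f hf => ?_⟩
  rw [← hE'eq] at hf
  calc ‖Λ f‖ ≤ C * ∏ i, (volume (E' i)).toReal ^ a i := hbound f hf
    _ = C * ∏ i, update (fun i => (volume (E i)).toReal) j₀ (volume (E' j₀)).toReal i ^ a i := by
      conv_lhs => rw [hE'eq]
      simp only [toReal_measure_update_apply]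
    _ ≤ C * (4 * ∏ i, (volume (E i)).toReal ^ a i) := by
      gcongr
      exact prod_rpow_update_le (fun i => ENNReal.toReal_nonneg)
        (rpow_le_four_mul_rpow hMpos hME hEM haj)
    _ = 4 * C * ∏ i, (volume (E i)).toReal ^ a i := by ring

lemma MajorSubsetBound.of_convex_comb {σ : Type*} [Fintype σ] [Nonempty σ] {a : σ → Fin 4 → ℝ}
    (h : ∀ s, MajorSubsetBound Λ j₀ (a s) C) (hC : 0 ≤ C) {θ : σ → ℝ} (hθ : ∀ s, 0 ≤ θ s)
    (hθ1 : ∑ s, θ s = 1) : MajorSubsetBound Λ j₀ (fun i => ∑ s, θ s * a s i) C := by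
  intro E hm hpos hfin
  obtain ⟨s, hs⟩ := exists_prod_rpow_le_prod_rpow_sum
    (fun i => ENNReal.toReal_pos (hpos i).ne' (hfin i).ne) a hθ hθ1
  obtain ⟨M, hMm, hME, hmaj, hbound⟩ := h s E hm hpos hfin
  exact ⟨M, hMm, hME, hmaj, fun f hf => (hbound f hf).trans (mul_le_mul_of_nonneg_left hs hC)⟩

namespace MajorSubsetBound

variable {α : Fin 4 → ℝ}

lemma rwt_of_neg (h : MajorSubsetBound Λ j₀ α C) (hC : 0 ≤ C) (hα : α j₀ < 0) : RWT Λ α C := by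
  intro E hm hpos hfin
  obtain ⟨M, hMm, hME, hmaj, hbound⟩ := h E hm hpos hfin
  obtain ⟨hMpos, hMle, -⟩ := toReal_measure_major_subset (hpos j₀) (hfin j₀) hME hmaj
  refine ⟨update E j₀ M, fun i => ?_, fun i hi => ?_, fun f hf => (hbound f hf).trans ?_⟩
  · rcases eq_or_ne i j₀ with rfl | hi
    · simpa using ⟨hMm, hME, hmaj⟩
    · simpa [hi, hm i] using le_mul_of_one_le_left zero_le one_le_two
  · simp [show i ≠ j₀ from fun h => (h ▸ hi).not_gt hα]
  refine mul_le_mul_of_nonneg_left (Finset.prod_le_prod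
    (fun i _ => Real.rpow_nonneg ENNReal.toReal_nonneg _) fun i _ => ?_) hC
  rcases eq_or_ne i j₀ with rfl | hi
  · simpa using Real.rpow_le_rpow_of_nonpos hMpos hMle hα.le
  · simp [hi]

lemma exists_subset (h : MajorSubsetBound Λ j₀ α C) (hΛ : Multilinear4 Λ) (hC : 0 ≤ C)
    {E : Fin 4 → Set ℝ} (hm : ∀ i, MeasurableSet (E i)) (hpos : ∀ i, 0 < volume (E i))
    (hfin : ∀ i, volume (E i) < ⊤) {F : Set ℝ} (hFm : MeasurableSet F) (hFfin : volume F < ⊤) :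
    ∃ M ⊆ F, MeasurableSet M ∧ volume F ≤ 2 * volume M ∧
      ∀ f : Fin 4 → ℝ → ℂ, (∀ i, MemX (update E j₀ M i) (f i)) →
        ‖Λ f‖ ≤ C * ∏ i, (volume (update E j₀ F i)).toReal ^ α i := by
  rcases eq_or_ne (volume F) 0 with hF0 | hF0
  · refine ⟨∅, Set.empty_subset F, MeasurableSet.empty, by simp [hF0], fun f hf => ?_⟩
    rw [hΛ.map_eq_zero (i := j₀) (MemX.eq_zero_of_empty (by simpa using hf j₀)), norm_zero]
    exact mul_nonneg hC (Finset.prod_nonneg fun i _ => Real.rpow_nonneg ENNReal.toReal_nonneg _)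
  · obtain ⟨M, hMm, hMF, hmaj, hbound⟩ := h (update E j₀ F)
      (fun i => by rcases eq_or_ne i j₀ with rfl | hi <;> simp [*])
      (fun i => by rcases eq_or_ne i j₀ with rfl | hi <;> simp [*, pos_iff_ne_zero])
      (fun i => by rcases eq_or_ne i j₀ with rfl | hi <;> simp [*])
    simp only [update_self, update_idem] at hMF hmaj hbound
    exact ⟨M, hMF, hMm, hmaj, hbound⟩

lemma exists_exhaustion (h : MajorSubsetBound Λ j₀ α C) (hΛ : Multilinear4 Λ) (hC : 0 ≤ C)
    {E : Fin 4 → Set ℝ} (hm : ∀ i, MeasurableSet (E i)) (hpos : ∀ i, 0 < volume (E i))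
    (hfin : ∀ i, volume (E i) < ⊤) :
    ∃ M : Set ℝ → Set ℝ, (∀ F, M F ⊆ F) ∧ ∀ n, let S := (fun F => F \ M F)^[n] (E j₀)
      MeasurableSet S ∧ S ⊆ E j₀ ∧ (volume S).toReal ≤ 2⁻¹ ^ n * (volume (E j₀)).toReal ∧
      MeasurableSet (M S) ∧ ∀ g : Fin 4 → ℝ → ℂ, (∀ i, MemX (update E j₀ (M S) i) (g i)) →
        ‖Λ g‖ ≤ C * ∏ i, (volume (update E j₀ S i)).toReal ^ α i := by
  have hsel : ∀ F, ∃ M ⊆ F, MeasurableSet F → F ⊆ E j₀ → MeasurableSet M ∧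
      volume F ≤ 2 * volume M ∧ ∀ g : Fin 4 → ℝ → ℂ, (∀ i, MemX (update E j₀ M i) (g i)) →
        ‖Λ g‖ ≤ C * ∏ i, (volume (update E j₀ F i)).toReal ^ α i := fun F => by
    by_cases hF : MeasurableSet F ∧ F ⊆ E j₀
    · obtain ⟨M, hMF, hM⟩ := h.exists_subset hΛ hC hm hpos hfin hF.1
        ((measure_mono hF.2).trans_lt (hfin j₀))
      exact ⟨M, hMF, fun _ _ => hM⟩
    · exact ⟨F, subset_rfl, fun hFm hFE => (hF ⟨hFm, hFE⟩).elim⟩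
  choose M hMF hM using hsel
  refine ⟨M, hMF, fun n => ?_⟩
  obtain ⟨hSm, hSE, hSμ⟩ := measurableSet_iterate_sdiff_and_le (hm j₀)
    (fun F hFm hFE => ⟨(hM F hFm hFE).1, hMF F, (hM F hFm hFE).2.1⟩) n
  refine ⟨hSm, hSE, ?_, (hM _ hSm hSE).1, (hM _ hSm hSE).2.2⟩
  have := ENNReal.toReal_mono (hfin j₀).ne hSμ
  rw [ENNReal.toReal_mul, ENNReal.toReal_pow, ENNReal.toReal_ofNat] at this
  rw [inv_pow, inv_mul_eq_div, le_div_iff₀ (by positivity)]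
  linarith

lemma rwt_of_pos (h : MajorSubsetBound Λ j₀ α C) (hΛ : Multilinear4 Λ) (hC : 0 ≤ C)
    (hα : 0 < α j₀) {b : Fin 4 → ℝ} {C' : ℝ} (hb : RWT Λ b C') (hb0 : ∀ i, 0 ≤ b i)
    (hbj : 0 < b j₀) (hC' : 0 ≤ C') : RWT Λ α (C * (1 - 2⁻¹ ^ α j₀)⁻¹) := by
  set r : ℝ := 2⁻¹ ^ α j₀
  have hr1 : r < 1 := Real.rpow_lt_one (by norm_num) (by norm_num) hα
  intro E hm hpos hfin
  refine ⟨E, fun i => ⟨hm i, subset_rfl, le_mul_of_one_le_left zero_le one_le_two⟩,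
    fun _ _ => rfl, fun f hf => ?_⟩
  set K : Fin 4 → ℝ := fun i => (volume (E i)).toReal
  obtain ⟨M, hMF, hS⟩ := h.exists_exhaustion hΛ hC hm hpos hfin
  set S : ℕ → Set ℝ := fun n => (fun F => F \ M F)^[n] (E j₀)
  have hpiece : ∀ n, ‖Λ (update f j₀ ((M (S n)).indicator (f j₀)))‖ ≤
      C * r ^ n * ∏ i, K i ^ α i := fun n => by
    obtain ⟨-, -, hSle, hMm, hbound⟩ := hS n
    refine (hbound _ (memX_update hf j₀ ((hf j₀).indicator hMm))).trans ?_
    simp only [toReal_measure_update_apply, mul_assoc]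
    refine mul_le_mul_of_nonneg_left (prod_rpow_update_le (fun i => ENNReal.toReal_nonneg) ?_) hC
    calc (volume (S n)).toReal ^ α j₀ ≤ (2⁻¹ ^ n * K j₀) ^ α j₀ :=
          Real.rpow_le_rpow ENNReal.toReal_nonneg hSle hα.le
      _ = r ^ n * K j₀ ^ α j₀ := by
        rw [Real.mul_rpow (by positivity) ENNReal.toReal_nonneg, Real.rpow_pow_comm (by norm_num)]
  have hrem : Tendsto (fun N => Λ (update f j₀ ((S N).indicator (f j₀)))) atTop (𝓝 0) :=
    hb.tendsto_map_update_indicator hb0 hbj hm hpos hfin hC' (fun n => (hS n).1)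
      (fun n => ((measure_mono (hS n).2.1).trans_lt (hfin j₀)).ne)
      (squeeze_zero (fun n => ENNReal.toReal_nonneg) (fun n => (hS n).2.2.1) (by
        simpa using (tendsto_pow_atTop_nhds_zero_of_lt_one (r := (2⁻¹ : ℝ)) (by norm_num)
          (by norm_num)).mul_const (K j₀))) hf
  have hgeom : ∀ N, ∑ n ∈ Finset.range N, C * r ^ n * ∏ i, K i ^ α i ≤
      C * (1 - r)⁻¹ * ∏ i, K i ^ α i := fun N => by
    rw [← Finset.sum_mul, ← Finset.mul_sum]
    gcongr
    exact geom_sum_le_inv_one_sub (by positivity) hr1 N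
  have hsplit : ∀ N, ‖Λ f‖ ≤ ∑ n ∈ Finset.range N, ‖Λ (update f j₀ ((M (S n)).indicator (f j₀)))‖ +
      ‖Λ (update f j₀ ((S N).indicator (f j₀)))‖ := fun N => by
    rw [hΛ.map_eq_sum_add_iterate_sdiff hMF (hf j₀).2.1 N]
    exact (norm_add_le _ _).trans (add_le_add_left (norm_sum_le _ _) _)
  refine ge_of_tendsto' (by simpa using hrem.norm.const_add (C * (1 - r)⁻¹ * ∏ i, K i ^ α i))
    fun N => (hsplit N).trans ?_
  exact add_le_add_left ((Finset.sum_le_sum fun n _ => hpiece n).trans (hgeom N)) _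

end MajorSubsetBound

end

theorem statement7_general (Λ : (Fin 4 → ℝ → ℂ) → ℂ) (hΛ : Multilinear4 Λ)
    (a : Fin 4 → Fin 4 → ℝ) (j₀ : Fin 4) (θ : Fin 4 → ℝ) (α : Fin 4 → ℝ)
    (hadm : ∀ s, Admissible (a s))
    (hcommon : ∀ s i, a s i < 0 → i = j₀)
    (hrwt : ∀ s, ∃ C : ℝ, RWT Λ (a s) C)
    (hθ : ∀ s, 0 < θ s ∧ θ s < 1) (hθ1 : ∑ s, θ s = 1)
    (hα : α = fun i => ∑ s, θ s * a s i)
    (hgoodcase : (∀ i, 0 ≤ α i) → 0 < α j₀)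
    (hbadcase : ∀ i, α i < 0 → i = j₀) :
    ∃ C : ℝ, RWT Λ α C := by
  obtain ⟨C, hC, hrwt⟩ := RWT.exists_nonneg_const hrwt
  have hnonneg : ∀ s i, i ≠ j₀ → 0 ≤ a s i := fun s i hi => not_lt.mp (mt (hcommon s i) hi)
  have hB : MajorSubsetBound Λ j₀ α (4 * C) := hα ▸ MajorSubsetBound.of_convex_comb
    (fun s => (hrwt s).majorSubsetBound hC (hnonneg s) ((hadm s).neg_two_lt j₀).le)
    (by positivity) (fun s => (hθ s).1.le) hθ1
  by_cases hgood : ∀ i, 0 ≤ α i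
  · have hαj := hgoodcase hgood
    obtain ⟨s, -, hs⟩ : ∃ s ∈ Finset.univ, 0 < θ s * a s j₀ :=
      Finset.exists_lt_of_sum_lt (by simpa [hα] using hαj)
    have hsj : 0 < a s j₀ := pos_of_mul_pos_right hs (hθ s).1.le
    exact ⟨_, hB.rwt_of_pos hΛ (by positivity) hαj (hrwt s)
      (fun i => (eq_or_ne i j₀).elim (fun h => h ▸ hsj.le) (hnonneg s i)) hsj hC⟩
  · obtain ⟨i, hi⟩ := not_forall.mp hgood
    obtain rfl := hbadcase i (not_le.mp hi)
    exact ⟨_, hB.rwt_of_neg (by positivity) (not_le.mp hi)⟩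

/-- Interpolation towards a possibly bad tuple: suppose Λ is of restricted weak type at four
admissible tuples, each good or bad with the same bad index j₀, let α be an admissible strictly
convex combination of them, and suppose some `a s` is a majorant of α with index j₀, where j₀
has `α j₀ > 0` if α is good, and j₀ is the bad index of α otherwise.  Then Λ is of restricted
weak type α. -/
theorem statement7 (Λ : (Fin 4 → ℝ → ℂ) → ℂ) (hΛ : Multilinear4 Λ)
    (a : Fin 4 → Fin 4 → ℝ) (j₀ : Fin 4) (θ : Fin 4 → ℝ) (α : Fin 4 → ℝ)
    (hadm : ∀ s, Admissible (a s))
    (hcommon : ∀ s i, a s i < 0 → i = j₀)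
    (hrwt : ∀ s, ∃ C : ℝ, RWT Λ (a s) C)
    (hθ : ∀ s, 0 < θ s ∧ θ s < 1) (hθ1 : ∑ s, θ s = 1)
    (hα : α = fun i => ∑ s, θ s * a s i)
    (hαadm : Admissible α)
    (hmaj : ∃ s, ∀ j, j ≠ j₀ → α j < a s j)
    (hgoodcase : (∀ i, 0 ≤ α i) → 0 < α j₀)
    (hbadcase : ∀ i, α i < 0 → i = j₀) :
    ∃ C : ℝ, RWT Λ α C :=
  statement7_general Λ hΛ a j₀ θ α hadm hcommon hrwt hθ hθ1 hα hgoodcase hbadcase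

end
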